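/- In R = F_2[w₁, w₂, ...] with involution ω, power sums p_k, and d(x) = x + ω(x), for every k ≥ 1: w_{2k}² = w_{2k}·d(w_{2k}) + p_k⁴ + Σ_{i=0}^{k-1} [ d(w_{2i}·w_{4k-2i}) + d(w_{2i})·d(w_{4k-2i}) ]. -/

import Mathlib

/-!
Put `W = ∑ wₙ tⁿ`, `V = ∑ ω(wₙ) tⁿ` and `P = ∑_{n ≥ 1} pₙ tⁿ` in `R⟦t⟧`, and let `D = t d/dt`.
The relation defining `ω` says `W V = 1`, and the Newton identities say `P W = D W`, so `P` is
the logarithmic derivative `D W / W`. In characteristic 2 the operator `D` is idempotent, hence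
`D P = D W / W - (D W / W)² = P + P²`; comparing coefficients of `t^{2n}`, where `D` acts by `0`,
gives `p_{2n} = p_n²` and so `p_k⁴ = p_{4k}`. Subtracting the coefficient of `t^{4k}` in `W V = 1`
from the one in `D W · V = P` leaves only the even-indexed terms:
`p_{4k} = ∑_{i=0}^{2k} w_{2i} ω(w_{4k-2i})`. Pairing `i` with `2k - i`, and using
`d(ab) + d(a) d(b) = a ω(b) + ω(a) b`, this is the claimed formula.
-/

open Finset

/-- The variables `w₁, w₂, …` of `R = 𝔽₂[w₁, w₂, …]`, with the convention `w₀ = 1`. -/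
noncomputable def w : ℕ → MvPolynomial ℕ (ZMod 2)
  | 0 => 1
  | k + 1 => MvPolynomial.X k

namespace Finset

variable {M : Type*} [AddCommMonoid M]

theorem sum_range_two_mul_add_one_ite_even (f : ℕ → M) (n : ℕ) :
    ∑ j ∈ range (2 * n + 1), (if Even j then f j else 0) = ∑ i ∈ range (n + 1), f (2 * i) := by
  induction n with
  | zero => simp
  | succ n ih =>
    have hodd : ¬ Even (2 * n + 1) := Nat.not_even_iff_odd.mpr (odd_two_mul_add_one n)
    have heven : Even (2 * (n + 1)) := even_two_mul (n + 1)
    rw [show 2 * (n + 1) + 1 = 2 * n + 1 + 1 + 1 by ring, sum_range_succ, sum_range_succ, ih,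
      if_neg hodd, add_zero, show 2 * n + 1 + 1 = 2 * (n + 1) by ring, if_pos heven,
      sum_range_succ _ (n + 1)]

theorem sum_range_two_mul_add_one_eq_add_sum_pairs (f : ℕ → M) (k : ℕ) :
    ∑ i ∈ range (2 * k + 1), f i = f k + ∑ i ∈ range k, (f i + f (2 * k - i)) := by
  have hupper : ∑ i ∈ range k, f (k + (i + 1)) = ∑ i ∈ range k, f (2 * k - i) := by
    rw [← sum_range_reflect]
    exact sum_congr rfl fun i hi => congrArg f (by have := mem_range.mp hi; omega)
  rw [show 2 * k + 1 = k + (k + 1) by ring, sum_range_add, sum_range_succ', hupper,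
    sum_add_distrib]
  simp only [add_zero]
  abel

end Finset

theorem CharTwo.mul_add_map_mul_add_add_map_mul_add_map {R : Type*} [CommRing R] [CharP R 2]
    (ω : R →+* R) (a b : R) :
    (a * b + ω (a * b)) + (a + ω a) * (b + ω b) = a * ω b + ω a * b := by
  rw [map_mul]
  linear_combination (a * b + ω a * ω b) * CharTwo.two_eq_zero (R := R)

namespace PowerSeries

variable {R : Type*} [CommRing R]

theorem coeff_mul_pow_expChar (p : ℕ) [ExpChar R p] (f : R⟦X⟧) (n : ℕ) :
    coeff (p * n) (f ^ p) = coeff n f ^ p := by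
  rw [← MvPowerSeries.map_frobenius_expand p (expChar_ne_zero R p)]
  exact congrArg (frobenius R p) (coeff_expand_mul p (expChar_ne_zero R p) f n)

theorem mk_mul_mk_eq_one {a b : ℕ → R} (h₀ : a 0 * b 0 = 1)
    (h : ∀ n, 1 ≤ n → ∑ i ∈ range (n + 1), a i * b (n - i) = 0) : mk a * mk b = 1 := by
  ext n
  rw [coeff_mul, coeff_one,
    Nat.sum_antidiagonal_eq_sum_range_succ (fun i j => coeff i (mk a) * coeff j (mk b))]
  rcases Nat.eq_zero_or_pos n with rfl | hn
  · simpa using h₀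
  · simpa [hn.ne'] using h n hn

noncomputable def eulerDerivation : Derivation R R⟦X⟧ R⟦X⟧ := (X : R⟦X⟧) • d⁄dX R

theorem coeff_eulerDerivation (f : R⟦X⟧) (n : ℕ) :
    coeff n (eulerDerivation f) = n * coeff n f := by
  rcases n with _ | n
  · simp [eulerDerivation]
  · simp [eulerDerivation, coeff_succ_X_mul, coeff_derivative, mul_comm]

-- `p 0` does not occur in the Newton identities, so it is replaced by `0`.
theorem mk_mul_mk_eq_eulerDerivation {p a : ℕ → R}
    (h : ∀ n : ℕ, 1 ≤ n → (n : R) * a n = ∑ j ∈ range n, p (n - j) * a j) :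
    mk (fun n => if n = 0 then 0 else p n) * mk a = eulerDerivation (mk a) := by
  ext n
  rw [mul_comm, coeff_mul, coeff_eulerDerivation, Nat.sum_antidiagonal_eq_sum_range_succ
    (fun i j => coeff i (mk a) * coeff j (mk fun n => if n = 0 then 0 else p n)),
    Nat.succ_eq_add_one, sum_range_succ]
  rcases Nat.eq_zero_or_pos n with rfl | hn
  · simp
  · simp only [coeff_mk, Nat.sub_self, if_true, mul_zero, add_zero, h n hn]
    exact sum_congr rfl fun j hj => by
      rw [if_neg (by have := mem_range.mp hj; omega), mul_comm]

section CharTwo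

variable [CharP R 2]

theorem eulerDerivation_eulerDerivation (f : R⟦X⟧) :
    eulerDerivation (eulerDerivation f) = eulerDerivation f := by
  ext n
  rw [coeff_eulerDerivation, coeff_eulerDerivation, ← mul_assoc, ← Nat.cast_mul,
    CharTwo.natCast_eq_ite, CharTwo.natCast_eq_ite n]
  simp [Nat.even_mul]

theorem coeff_add_eulerDerivation (f : R⟦X⟧) (n : ℕ) :
    coeff n (f + eulerDerivation f) = if Even n then coeff n f else 0 := by
  rw [map_add, coeff_eulerDerivation, CharTwo.natCast_eq_ite]
  split_ifs <;> simp [CharTwo.add_self_eq_zero]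

variable {W V P : R⟦X⟧}

theorem eulerDerivation_eq_add_sq (hWV : W * V = 1) (hP : P * W = eulerDerivation W) :
    eulerDerivation P = P + P ^ 2 := by
  set D := (eulerDerivation : Derivation R R⟦X⟧ R⟦X⟧)
  have hP' : P = D W * V := by rw [← hP, mul_assoc, hWV, mul_one]
  have hDV : W * D V + V * D W = 0 := by
    rw [← smul_eq_mul, ← smul_eq_mul, ← Derivation.leibniz, hWV, Derivation.map_one_eq_zero]
  have hDP : D P = D W * D V + V * D W := by
    rw [hP', Derivation.leibniz, smul_eq_mul, smul_eq_mul, eulerDerivation_eulerDerivation]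
  have two : (2 : R⟦X⟧) = 0 := by rw [← map_ofNat C 2, CharTwo.two_eq_zero, map_zero]
  rw [hDP, hP']
  linear_combination (-(D W * V)) * hDV + D W * D V * hWV + D W * D V * two

theorem coeff_two_mul_eq_sq (hWV : W * V = 1) (hP : P * W = eulerDerivation W) (n : ℕ) :
    coeff (2 * n) P = coeff n P ^ 2 := by
  have h := congrArg (coeff (2 * n)) (eulerDerivation_eq_add_sq hWV hP)
  rw [coeff_eulerDerivation, map_add, coeff_mul_pow_expChar, Nat.cast_mul, Nat.cast_ofNat,
    CharTwo.two_eq_zero, zero_mul, zero_mul, eq_comm, CharTwo.add_eq_zero] at h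
  exact h

theorem coeff_two_mul_eq_sum (hWV : W * V = 1) (hP : P * W = eulerDerivation W) {m : ℕ}
    (hm : m ≠ 0) :
    coeff (2 * m) P = ∑ i ∈ range (m + 1), coeff (2 * i) W * coeff (2 * m - 2 * i) V := by
  have hPV : P = eulerDerivation W * V := by rw [← hP, mul_assoc, hWV, mul_one]
  have hWV₀ : coeff (2 * m) (W * V) = 0 := by simp [hWV, coeff_one, hm]
  calc coeff (2 * m) P = coeff (2 * m) ((W + eulerDerivation W) * V) := by
        rw [add_mul, map_add, hWV₀, zero_add, hPV]
    _ = ∑ j ∈ range (2 * m + 1), if Even j then coeff j W * coeff (2 * m - j) V else 0 := by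
        rw [coeff_mul, Nat.sum_antidiagonal_eq_sum_range_succ
          (fun i j => coeff i (W + eulerDerivation W) * coeff j V)]
        exact sum_congr rfl fun j _ => by rw [coeff_add_eulerDerivation, ite_mul, zero_mul]
    _ = _ := sum_range_two_mul_add_one_ite_even _ m

theorem coeff_four_mul_eq (hWV : W * V = 1) (hP : P * W = eulerDerivation W) {k : ℕ}
    (hk : k ≠ 0) :
    coeff (4 * k) P = coeff (2 * k) W * coeff (2 * k) V +
      ∑ i ∈ range k, (coeff (2 * i) W * coeff (4 * k - 2 * i) V +
        coeff (2 * i) V * coeff (4 * k - 2 * i) W) := by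
  rw [show 4 * k = 2 * (2 * k) by ring, coeff_two_mul_eq_sum hWV hP (by omega),
    sum_range_two_mul_add_one_eq_add_sum_pairs, show 2 * (2 * k) - 2 * k = 2 * k by omega]
  refine congrArg _ (sum_congr rfl fun i hi => ?_)
  have hik := mem_range.mp hi
  rw [show 2 * (2 * k - i) = 2 * (2 * k) - 2 * i by omega,
    show 2 * (2 * k) - (2 * (2 * k) - 2 * i) = 2 * i by omega, mul_comm (coeff (2 * i) V)]

end CharTwo

end PowerSeries

/-- In `R = 𝔽₂[w₁, w₂, …]` with the involution `ω` given by
`∑_{i=0}^{k} wᵢ · ω (w_{k-i}) = 0`, `d x = x + ω x`, and the power sums `p_k` given by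
the Newton identities: for every `k ≥ 1`,
`w_{2k}² = w_{2k} · d (w_{2k}) + p_k⁴ + ∑_{i=0}^{k-1} [ d (w_{2i} · w_{4k-2i}) + d (w_{2i}) · d (w_{4k-2i}) ]`. -/
theorem w_two_k_sq_formula
    (ω : MvPolynomial ℕ (ZMod 2) →+* MvPolynomial ℕ (ZMod 2))
    (hω : ∀ k : ℕ, 1 ≤ k → ∑ i ∈ Finset.range (k + 1), w i * ω (w (k - i)) = 0)
    (p : ℕ → MvPolynomial ℕ (ZMod 2))
    (hp : ∀ k : ℕ, 1 ≤ k →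
      (k : MvPolynomial ℕ (ZMod 2)) * w k = ∑ j ∈ Finset.range k, p (k - j) * w j)
    (k : ℕ) (hk : 1 ≤ k) :
    w (2 * k) ^ 2 =
      w (2 * k) * (w (2 * k) + ω (w (2 * k))) + p k ^ 4 +
        ∑ i ∈ Finset.range k,
          ((w (2 * i) * w (4 * k - 2 * i) + ω (w (2 * i) * w (4 * k - 2 * i))) +
            (w (2 * i) + ω (w (2 * i))) * (w (4 * k - 2 * i) + ω (w (4 * k - 2 * i)))) := by
  have hWV : PowerSeries.mk w * PowerSeries.mk (fun n => ω (w n)) = 1 :=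
    PowerSeries.mk_mul_mk_eq_one (by simp [w]) hω
  have hP := PowerSeries.mk_mul_mk_eq_eulerDerivation hp
  have hp4 : p k ^ 4 = p (4 * k) := by
    have h := PowerSeries.coeff_two_mul_eq_sq hWV hP (2 * k)
    rw [PowerSeries.coeff_two_mul_eq_sq hWV hP k, ← pow_mul, ← mul_assoc] at h
    simpa [show k ≠ 0 by omega] using h.symm
  have h4k := PowerSeries.coeff_four_mul_eq hWV hP (show k ≠ 0 by omega)
  simp only [PowerSeries.coeff_mk, show 4 * k ≠ 0 by omega, if_false] at h4k
  simp only [CharTwo.mul_add_map_mul_add_add_map_mul_add_map]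
  linear_combination -hp4 + h4k - p (4 * k) * CharTwo.two_eq_zero (R := MvPolynomial ℕ (ZMod 2))
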